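/- arXiv:1109.1803 — 2 statements merged into one kernel-verified Lean document; each statement's English description precedes it below -/
import Mathlib

section
/- If μ_{R₁} and μ_{R₂} are two fuzzy rough relations on X ⊆ U, then their algebraic product (μ_{R₁}·μ_{R₂})(x,y) = μ_{R₁}(x,y)·μ_{R₂}(x,y) is also a fuzzy rough relation on X. -/
variable {U : Type*}

/-- The S-equivalence class of a pair, for the componentwise product relation. -/
def classS (R : U → U → Prop) (p : U × U) : Set (U × U) :=
  {q | R p.1 q.1 ∧ R p.2 q.2}

/-- Lower approximation of X × X. -/
def lowerA (R : U → U → Prop) (X : Set U) : Set (U × U) :=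
  {p | classS R p ⊆ X ×ˢ X}

/-- Upper approximation of X × X. -/
def upperA (R : U → U → Prop) (X : Set U) : Set (U × U) :=
  {p | (classS R p ∩ X ×ˢ X).Nonempty}

/-- Fuzzy rough relation on X, dominated by the fuzzy set μY. -/
def IsFRR (R : U → U → Prop) (X : Set U) (μY : U → ℝ) (μ : U → U → ℝ) : Prop :=
  (∀ x y, 0 ≤ μ x y) ∧ (∀ x y, μ x y ≤ min (μY x) (μY y)) ∧
  (∀ p ∈ lowerA R X, μ p.1 p.2 = 1) ∧
  (∀ p ∉ upperA R X, μ p.1 p.2 = 0) ∧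
  (∀ p ∈ upperA R X \ lowerA R X, 0 < μ p.1 p.2 ∧ μ p.1 p.2 < 1)


theorem frr_prod {U : Type*} {R : U → U → Prop} (hR : Equivalence R)
    {X : Set U} {μY : U → ℝ} (hY : ∀ x, 0 ≤ μY x ∧ μY x ≤ 1)
    {μ1 μ2 : U → U → ℝ}
    (h1 : IsFRR R X μY μ1) (h2 : IsFRR R X μY μ2) :
    IsFRR R X μY (fun x y => μ1 x y * μ2 x y) := by
  obtain ⟨n1, b1, l1, u1, m1⟩ := h1
  obtain ⟨n2, b2, l2, u2, m2⟩ := h2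
  have hle1 : ∀ x y, μ2 x y ≤ 1 := fun x y =>
    le_trans (b2 x y) (le_trans (min_le_left _ _) (hY x).2)
  refine ⟨fun x y => mul_nonneg (n1 x y) (n2 x y), fun x y => ?_, fun p hp => ?_,
    fun p hp => ?_, fun p hp => ?_⟩
  · calc μ1 x y * μ2 x y ≤ μ1 x y * 1 :=
          mul_le_mul_of_nonneg_left (hle1 x y) (n1 x y)
      _ = μ1 x y := mul_one _
      _ ≤ _ := b1 x y
  · simp [l1 p hp, l2 p hp]
  · simp [u1 p hp]
  · exact ⟨mul_pos (m1 p hp).1 (m2 p hp).1,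
      mul_lt_one_of_nonneg_of_lt_one_left (n1 p.1 p.2) (m1 p hp).2 (hle1 _ _)⟩
end

section
/- If μ_{R₁} and μ_{R₂} are w-reflexive fuzzy rough relations on X ⊆ U (U finite), each dominated by the product membership min(μ(x),μ(y)), then μ_{R₁} ∨ μ_{R₂} ⊆ μ_{R₁} ∘ μ_{R₂}, i.e. max(μ_{R₁}(x,y), μ_{R₂}(x,y)) ≤ (μ_{R₁}∘μ_{R₂})(x,y) for all x,y ∈ U. -/
/-- Max-min composition of fuzzy relations on a finite nonempty set. -/
noncomputable def maxminComp {U : Type*} [Fintype U] [Nonempty U]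
    (μ ν : U → U → ℝ) (x y : U) : ℝ :=
  Finset.univ.sup' Finset.univ_nonempty (fun u => min (μ x u) (ν u y))

theorem wrefl_sup_le_comp {U : Type*} [Fintype U] [Nonempty U]
    (μ : U → ℝ) (μ1 μ2 : U → U → ℝ)
    (hw1 : ∀ x, μ x ≤ μ1 x x) (hw2 : ∀ x, μ x ≤ μ2 x x)
    (hd1 : ∀ x y, μ1 x y ≤ min (μ x) (μ y))
    (hd2 : ∀ x y, μ2 x y ≤ min (μ x) (μ y)) :
    ∀ x y, max (μ1 x y) (μ2 x y) ≤ maxminComp μ1 μ2 x y := by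
  intro x y
  apply max_le
  · calc μ1 x y ≤ min (μ1 x y) (μ2 y y) := by
          refine le_min le_rfl ?_
          exact le_trans (le_trans (hd1 x y) (min_le_right _ _)) (hw2 y)
      _ ≤ maxminComp μ1 μ2 x y :=
          Finset.le_sup' (fun u => min (μ1 x u) (μ2 u y)) (Finset.mem_univ y)
  · calc μ2 x y ≤ min (μ1 x x) (μ2 x y) := by
          refine le_min ?_ le_rfl
          exact le_trans (le_trans (hd2 x y) (min_le_left _ _)) (hw1 x)
      _ ≤ maxminComp μ1 μ2 x y :=
          Finset.le_sup' (fun u => min (μ1 x u) (μ2 u y)) (Finset.mem_univ x)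
end
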